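/- arXiv:2312.05905 — 3 statements merged into one kernel-verified Lean document; each statement's English description precedes it below -/
import Mathlib

section
/- Let G be a finite simple graph that is strongly regular with parameters (n, d, λ, μ). Then for every vertex v, the depth-1 IGEL encoding of v is the multiset consisting of the pair (0, d) with multiplicity 1 and the pair (1, 1 + λ) with multiplicity d. -/
open Classical in
/-- The closed `k`-ball `B_k(v) = {u | dist_G(u, v) ≤ k}` (as a finset of vertices that
are reachable from `v` within distance `k`). -/
noncomputable def kball {V : Type*} [Fintype V] (G : SimpleGraph V) (v : V) (k : ℕ) :
    Finset V :=
  Finset.univ.filter fun u => G.Reachable u v ∧ G.dist u v ≤ k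

open Classical in
/-- `d_S(u|v)`: the degree of `u` in the subgraph of `G` induced on `B_k(v)`. -/
noncomputable def dSub {V : Type*} [Fintype V] (G : SimpleGraph V) (v : V) (k : ℕ)
    (u : V) : ℕ :=
  ((kball G v k).filter fun w => G.Adj u w).card

/-- The depth-`k` IGEL encoding of `v`: the multiset of pairs
`(dist_G(u, v), d_S(u|v))` over all `u ∈ B_k(v)`. -/
noncomputable def igel {V : Type*} [Fintype V] (G : SimpleGraph V) (k : ℕ) (v : V) :
    Multiset (ℕ × ℕ) :=
  (kball G v k).val.map fun u => (G.dist u v, dSub G v k u)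

lemma kball_one {V : Type*} [Fintype V] [DecidableEq V] (G : SimpleGraph V)
    [DecidableRel G.Adj] (v : V) :
    kball G v 1 = insert v (G.neighborFinset v) := by
  ext u
  simp only [kball, Finset.mem_filter, Finset.mem_univ, true_and, Finset.mem_insert,
    SimpleGraph.mem_neighborFinset]
  constructor
  · rintro ⟨hr, hd⟩
    interval_cases hdist : G.dist u v
    · exact Or.inl ((SimpleGraph.Reachable.dist_eq_zero_iff hr).mp hdist)
    · exact Or.inr ((SimpleGraph.dist_eq_one_iff_adj.mp hdist)).symm
  · rintro (rfl | hadj)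
    · exact ⟨SimpleGraph.Reachable.refl _, by rw [SimpleGraph.dist_self]; omega⟩
    · exact ⟨hadj.symm.reachable, le_of_eq (SimpleGraph.dist_eq_one_iff_adj.mpr hadj.symm)⟩

/-- In a strongly regular graph with parameters `(n, d, l, m)`, the
depth-1 IGEL encoding of every vertex `v` is the multiset consisting of the pair `(0, d)`
with multiplicity 1 and the pair `(1, 1 + l)` with multiplicity `d`. -/
theorem srg_igel_one {V : Type*} [Fintype V] {G : SimpleGraph V} [DecidableRel G.Adj]
    {n d l m : ℕ} (h : G.IsSRGWith n d l m) (v : V) :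
    igel G 1 v = Multiset.replicate 1 (0, d) + Multiset.replicate d (1, 1 + l) := by
  classical
  have hvnb : v ∉ G.neighborFinset v := by simp
  have hcard : (G.neighborFinset v).card = d := by
    have := h.regular v
    rw [SimpleGraph.degree] at this
    convert this using 2
  have hdv : dSub G v 1 v = d := by
    rw [dSub, kball_one, ← hcard]
    congr 1
    ext w
    simp only [Finset.mem_filter, Finset.mem_insert, SimpleGraph.mem_neighborFinset]
    tauto
  have hdu : ∀ u, G.Adj u v → dSub G v 1 u = 1 + l := by
    intro u hu
    rw [dSub, kball_one]
    have hkey : (insert v ((G.commonNeighbors u v).toFinset)).card = 1 + l := by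
      rw [Finset.card_insert_of_notMem (by
        simp [SimpleGraph.mem_commonNeighbors])]
      have hc : (G.commonNeighbors u v).toFinset.card = l := by
        rw [Set.toFinset_card]
        have := h.of_adj u v hu
        convert this using 2
      rw [hc]; ring
    rw [← hkey]
    congr 1
    ext w
    simp only [Finset.mem_filter, Finset.mem_insert, SimpleGraph.mem_neighborFinset,
      Set.mem_toFinset, SimpleGraph.mem_commonNeighbors]
    constructor
    · rintro ⟨rfl | hw, hw2⟩
      · exact Or.inl rfl
      · exact Or.inr ⟨hw2, hw⟩
    · rintro (rfl | ⟨h1, h2⟩)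
      · exact ⟨Or.inl rfl, hu⟩
      · exact ⟨Or.inr h2, h1⟩
  rw [igel, kball_one, Finset.insert_val_of_notMem hvnb, Multiset.map_cons]
  have h0 : G.dist v v = 0 := by simp
  rw [h0, hdv]
  have hrest : ((G.neighborFinset v).val.map fun u => (G.dist u v, dSub G v 1 u)) =
      Multiset.replicate d (1, 1 + l) := by
    rw [Multiset.eq_replicate]
    constructor
    · rw [Multiset.card_map]; exact hcard
    · intro b hb
      obtain ⟨u, hu, rfl⟩ := Multiset.mem_map.mp hb
      have hu' : G.Adj v u := by simpa using hu
      rw [hdu u hu'.symm, SimpleGraph.dist_eq_one_iff_adj.mpr hu'.symm]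
  rw [hrest, Multiset.replicate_one, Multiset.singleton_add]
end

section
/- Let G be a finite simple graph on n vertices that is strongly regular with parameters (n, d, λ, μ) with μ ≥ 1. Then for every vertex v, the depth-2 IGEL encoding of v is the multiset consisting of the pair (0, d) with multiplicity 1, the pair (1, d) with multiplicity d, and the pair (2, d) with multiplicity n − d − 1. In particular, the depth-2 IGEL encoding of a vertex of such a graph depends only on n and d, and not on λ or μ. -/
/-! Since `μ ≥ 1`, two distinct non-adjacent vertices have a common neighbour, so every vertex
lies within distance `2` of `v`. Hence `B_2(v)` is the whole vertex set, every `d_S(u|v)` is the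
full degree `d`, and the distance classes `0, 1, 2` are `{v}`, the `d` neighbours of `v` and its
`n - d - 1` neighbours in the complement graph. -/

open Finset SimpleGraph

theorem Finset.val_map_eq_replicate {α β : Type*} {s : Finset α} {f : α → β} {b : β}
    (hf : ∀ x ∈ s, f x = b) : s.val.map f = Multiset.replicate s.card b := by
  rw [Multiset.map_congr rfl hf, Multiset.map_const', card_val]

theorem SimpleGraph.univ_val_eq_singleton_add_neighborFinset_add_compl {V : Type*} [Fintype V]
    [DecidableEq V] (G : SimpleGraph V) [DecidableRel G.Adj] (v : V) :
    (univ : Finset V).val = {v} + (G.neighborFinset v).val + (Gᶜ.neighborFinset v).val := by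
  have hv : v ∉ G.neighborFinset v := by simp
  have hdisj : Disjoint ((G.neighborFinset v).cons v hv) (Gᶜ.neighborFinset v) :=
    Finset.disjoint_left.mpr fun u hu hu' => by simp_all
  have huniv : ((G.neighborFinset v).cons v hv).disjUnion _ hdisj = univ :=
    eq_univ_of_forall fun u => by simp; tauto
  rw [← huniv]
  rfl

section
variable {V : Type*} [Fintype V] {G : SimpleGraph V} {u v : V}

theorem SimpleGraph.IsSRGWith.edist_eq_two [DecidableRel G.Adj] {n d l m : ℕ}
    (h : G.IsSRGWith n d l m) (hm : 0 < m) (hne : u ≠ v) (hadj : ¬ G.Adj u v) :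
    G.edist u v = 2 := by
  refine edist_eq_two_iff.mpr ⟨hne, hadj, ?_⟩
  have hcard : 0 < Fintype.card (G.commonNeighbors u v) := h.of_not_adj hne hadj ▸ hm
  exact Set.nonempty_coe_sort.mp (Fintype.card_pos_iff.mp hcard)

theorem SimpleGraph.IsSRGWith.edist_le_two [DecidableRel G.Adj] {n d l m : ℕ}
    (h : G.IsSRGWith n d l m) (hm : 0 < m) (u v : V) : G.edist u v ≤ 2 := by
  rcases eq_or_ne u v with rfl | hne
  · simp
  by_cases hadj : G.Adj u v
  · rw [edist_eq_one_iff_adj.mpr hadj]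
    norm_num
  · exact (h.edist_eq_two hm hne hadj).le

theorem mem_kball_iff_edist_le {k : ℕ} : u ∈ kball G v k ↔ G.edist u v ≤ k := by
  classical
  simp only [kball, mem_filter, mem_univ, true_and]
  refine ⟨fun ⟨hr, hk⟩ => hr.coe_dist_eq_edist ▸ mod_cast hk, fun hk => ?_⟩
  have hr : G.Reachable u v :=
    edist_ne_top_iff_reachable.mp (ne_top_of_le_ne_top (ENat.natCast_ne_top k) hk)
  exact ⟨hr, by rwa [← hr.coe_dist_eq_edist, Nat.cast_le] at hk⟩

theorem dSub_eq_degree_of_kball_eq_univ [DecidableRel G.Adj] {k : ℕ}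
    (hk : kball G v k = univ) (u : V) : dSub G v k u = G.degree u := by
  rw [dSub, hk, ← card_neighborFinset_eq_degree]
  congr 1
  ext
  simp

theorem igel_eq_map_of_kball_eq_univ [DecidableRel G.Adj] {k : ℕ} (hk : kball G v k = univ) :
    igel G k v = univ.val.map fun u => (G.dist u v, G.degree u) := by
  simp only [igel, hk, dSub_eq_degree_of_kball_eq_univ hk]

end

/-- In a strongly regular graph on `n` vertices with parameters
`(n, d, l, m)`, `m ≥ 1`, the depth-2 IGEL encoding of every vertex `v` is the multiset
consisting of `(0, d)` once, `(1, d)` with multiplicity `d`, and `(2, d)` with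
multiplicity `n - d - 1`; in particular it depends only on `n` and `d`, and not on
`l` or `m`. -/
theorem srg_igel_two {V : Type*} [Fintype V] {G : SimpleGraph V} [DecidableRel G.Adj]
    {n d l m : ℕ} (h : G.IsSRGWith n d l m) (hm : 1 ≤ m) (v : V) :
    igel G 2 v = Multiset.replicate 1 (0, d) + Multiset.replicate d (1, d) +
      Multiset.replicate (n - d - 1) (2, d) := by
  classical
  have hball : kball G v 2 = univ :=
    eq_univ_of_forall fun u => mem_kball_iff_edist_le.mpr (h.edist_le_two hm u v)
  rw [igel_eq_map_of_kball_eq_univ hball, G.univ_val_eq_singleton_add_neighborFinset_add_compl v,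
    Multiset.map_add, Multiset.map_add, val_map_eq_replicate (b := (1, d)),
    val_map_eq_replicate (b := (2, d)), card_neighborFinset_eq_degree, h.regular.degree_eq,
    card_neighborFinset_eq_degree, h.compl_is_regular.degree_eq]
  · simp [h.regular.degree_eq]
  · intro u hu
    rw [mem_neighborFinset, compl_adj] at hu
    simp [SimpleGraph.dist, h.edist_eq_two hm hu.1.symm fun ha => hu.2 ha.symm,
      h.regular.degree_eq]
  · intro u hu
    rw [mem_neighborFinset] at hu
    simp [dist_eq_one_iff_adj.mpr hu.symm, h.regular.degree_eq]
end

section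
/- There is no graph isomorphism between the 4×4 Rook graph and the Shrikhande graph; i.e., these two strongly regular graphs with identical parameters (16, 6, 2, 2) are not isomorphic. -/
/-! Both graphs are strongly regular with parameters `(16, 6, 2, 2)`, but they differ locally:
each row of the Rook graph is a 4-clique, whereas in the Shrikhande graph the neighbourhood of
every vertex is a hexagon. Hence the Shrikhande graph has no triangle inside a neighbourhood,
so no 4-clique, and an isomorphism would carry the rows of the Rook graph to such cliques. -/

/-- The 4×4 Rook graph: the box (Cartesian) product `K₄ □ K₄` of two complete graphs on
4 vertices. Its vertices are pairs `(a, b)` with `a b : Fin 4`, and `(a, b)` is adjacent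
to `(c, d)` iff (`a = c` and `b ≠ d`) or (`b = d` and `a ≠ c`). -/
def rookGraph : SimpleGraph (Fin 4 × Fin 4) where
  Adj x y := (x.1 = y.1 ∧ x.2 ≠ y.2) ∨ (x.2 = y.2 ∧ x.1 ≠ y.1)
  symm := by
    constructor
    rintro x y (⟨h1, h2⟩ | ⟨h1, h2⟩)
    · exact Or.inl ⟨h1.symm, h2.symm⟩
    · exact Or.inr ⟨h1.symm, h2.symm⟩
  loopless := by
    constructor
    rintro x (⟨-, h⟩ | ⟨-, h⟩) <;> exact h rfl

instance : DecidableRel rookGraph.Adj := fun x y =>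
  inferInstanceAs (Decidable ((x.1 = y.1 ∧ x.2 ≠ y.2) ∨ (x.2 = y.2 ∧ x.1 ≠ y.1)))

/-- The connection set of the Shrikhande graph:
`S = {(1,0), (−1,0), (0,1), (0,−1), (1,1), (−1,−1)} ⊆ (ZMod 4) × (ZMod 4)`. -/
def shrikhandeS : Finset (ZMod 4 × ZMod 4) :=
  {(1, 0), (-1, 0), (0, 1), (0, -1), (1, 1), (-1, -1)}

/-- The Shrikhande graph: the Cayley graph on the group `(ZMod 4) × (ZMod 4)` with
connection set `S = {(1,0), (−1,0), (0,1), (0,−1), (1,1), (−1,−1)}`; `x` is adjacent to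
`y` iff `x - y ∈ S`. -/
def shrikhandeGraph : SimpleGraph (ZMod 4 × ZMod 4) where
  Adj x y := x - y ∈ shrikhandeS
  symm := by
    constructor
    intro x y h
    beta_reduce at h ⊢
    have hxy : y - x = -(x - y) := (neg_sub x y).symm
    rw [hxy]
    revert h
    have : ∀ z ∈ shrikhandeS, -z ∈ shrikhandeS := by decide
    exact this (x - y)
  loopless := by
    constructor
    intro x h
    beta_reduce at h
    rw [sub_self] at h
    revert h
    decide

instance : DecidableRel shrikhandeGraph.Adj := fun x y =>
  inferInstanceAs (Decidable (x - y ∈ shrikhandeS))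

namespace SimpleGraph

variable {α : Type*} {G : SimpleGraph α} {n : ℕ}

theorem cliqueFree_succ_of_cliqueFreeOn_neighborSet
    (h : ∀ a, G.CliqueFreeOn (G.neighborSet a) n) : G.CliqueFree (n + 1) := by
  classical
  intro s hs
  obtain ⟨a, ha⟩ : s.Nonempty := Finset.card_pos.1 (hs.card_eq ▸ n.succ_pos)
  refine h a (fun b hb => ?_) (hs.erase_of_mem ha)
  rw [Finset.coe_erase] at hb
  exact hs.isClique ha hb.1 (Ne.symm hb.2)

end SimpleGraph

open SimpleGraph

theorem rookGraph_not_cliqueFree_four : ¬ rookGraph.CliqueFree 4 := fun h =>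
  h {(0, 0), (0, 1), (0, 2), (0, 3)} (by decide)

theorem shrikhandeGraph_adj_sub_right (x y z : ZMod 4 × ZMod 4) :
    shrikhandeGraph.Adj (x - z) (y - z) ↔ shrikhandeGraph.Adj x y := by
  simp only [shrikhandeGraph, sub_sub_sub_cancel_right]

-- Under adjacency the six elements of `shrikhandeS` form a hexagon.
theorem shrikhandeS_triangleFree : ∀ x ∈ shrikhandeS, ∀ y ∈ shrikhandeS, ∀ z ∈ shrikhandeS,
    shrikhandeGraph.Adj x y → shrikhandeGraph.Adj x z → ¬ shrikhandeGraph.Adj y z := by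
  decide

theorem shrikhandeGraph_cliqueFreeOn_neighborSet (a : ZMod 4 × ZMod 4) :
    shrikhandeGraph.CliqueFreeOn (shrikhandeGraph.neighborSet a) 3 := by
  intro t ht h3
  obtain ⟨x, y, z, hxy, hxz, hyz, rfl⟩ := is3Clique_iff.1 h3
  simp only [Finset.coe_insert, Finset.coe_singleton, Set.insert_subset_iff,
    Set.singleton_subset_iff, mem_neighborSet] at ht
  obtain ⟨hx, hy, hz⟩ := ht
  exact shrikhandeS_triangleFree (x - a) hx.symm (y - a) hy.symm (z - a) hz.symm
    ((shrikhandeGraph_adj_sub_right x y a).2 hxy) ((shrikhandeGraph_adj_sub_right x z a).2 hxz)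
    ((shrikhandeGraph_adj_sub_right y z a).2 hyz)

theorem shrikhandeGraph_cliqueFree_four : shrikhandeGraph.CliqueFree 4 :=
  cliqueFree_succ_of_cliqueFreeOn_neighborSet shrikhandeGraph_cliqueFreeOn_neighborSet

/-- There is no graph isomorphism between the 4×4 Rook graph and the
Shrikhande graph: these two strongly regular graphs with identical parameters
`(16, 6, 2, 2)` are not isomorphic. -/
theorem rook_not_iso_shrikhande : ¬ Nonempty (rookGraph ≃g shrikhandeGraph) := fun ⟨e⟩ =>
  rookGraph_not_cliqueFree_four (shrikhandeGraph_cliqueFree_four.comap e.isContained)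
end
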